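/- arXiv:1907.08826 — 3 statements merged into one kernel-verified Lean document; each statement's English description precedes it below -/
import Mathlib

section
/- Let (X, Σ, μ) be a σ-finite measure space and let W be a bounded linear operator on L²(μ) such that W*W = M_J, the multiplication operator by a nonnegative measurable function J. If there is a constant c > 0 with J ≥ c almost everywhere on the set Coz J = {x : J(x) ≠ 0}, then W has closed range. -/
open MeasureTheory

/-!
Since `‖W f‖² = ⟪f, W*W f⟫ = ∫ J |f|²`, the operator `W` does not see `f` off the cozero set
`S` of `J`, so `W = W ∘ Q` for the projection `Q f = 1_S f`, while on the range of `Q` the bound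
`J ≥ c` gives `‖W f‖² ≥ c ‖f‖²`. So `W` restricted to the closed subspace `range Q` is bounded
below and has the same range as `W`, which is therefore closed.
-/

theorem ContinuousLinearMap.isClosed_range_of_isIdempotentElem_of_mul_norm_le
    {𝕜 E F : Type*} [NontriviallyNormedField 𝕜] [NormedAddCommGroup E] [NormedSpace 𝕜 E]
    [CompleteSpace E] [NormedAddCommGroup F] [NormedSpace 𝕜 F]
    (W : E →L[𝕜] F) {P : E →L[𝕜] E} (hP : IsIdempotentElem P) (hWP : W ∘L P = W)
    {c : ℝ} (hc : 0 < c) (hbelow : ∀ x, c * ‖P x‖ ≤ ‖W (P x)‖) :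
    IsClosed (Set.range W) := by
  have : CompleteSpace P.range := (IsIdempotentElem.isClosed_range hP).completeSpace_coe
  let T : P.range →L[𝕜] F := W ∘L P.range.subtypeL
  have hrange : Set.range T = Set.range W := by
    refine Set.Subset.antisymm (Set.range_subset_iff.2 fun m => ⟨m, rfl⟩) ?_
    rintro _ ⟨x, rfl⟩
    exact ⟨⟨P x, x, rfl⟩, congrArg (· x) hWP⟩
  rw [← hrange]
  refine (T.antilipschitz_of_bound (K := ⟨c⁻¹, inv_nonneg.2 hc.le⟩) ?_).isClosed_range
    T.uniformContinuous
  rintro ⟨_, x, rfl⟩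
  change ‖P x‖ ≤ c⁻¹ * ‖W (P x)‖
  rw [inv_mul_eq_div, le_div_iff₀ hc, mul_comm]
  exact hbelow x

namespace MeasureTheory.Lp

variable {α E : Type*} [MeasurableSpace α] {μ : Measure α} {p : ENNReal} [Fact (1 ≤ p)]
  (𝕜 : Type*) [NontriviallyNormedField 𝕜] [NormedAddCommGroup E] [NormedSpace 𝕜 E]
  {s : Set α} (hs : MeasurableSet s)

noncomputable def indicatorL : Lp E p μ →L[𝕜] Lp E p μ :=
  (ContinuousLinearMap.lsmul 𝕜 𝕜).holderL μ ⊤ p p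
    (MemLp.toLp (s.indicator fun _ => (1 : 𝕜)) ((memLp_top_const 1).indicator hs))

theorem coeFn_indicatorL (f : Lp E p μ) : indicatorL 𝕜 hs f =ᵐ[μ] s.indicator f := by
  filter_upwards [(ContinuousLinearMap.lsmul 𝕜 𝕜).coeFn_holder (p := ⊤) (r := p) _ f,
    MemLp.coeFn_toLp (μ := μ) (f := s.indicator fun _ => (1 : 𝕜))
      ((memLp_top_const 1).indicator hs)] with x hQ hind
  rw [indicatorL, ContinuousLinearMap.holderL_apply_apply, hQ, hind]
  by_cases hx : x ∈ s <;> simp [hx]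

theorem isIdempotentElem_indicatorL :
    IsIdempotentElem (indicatorL 𝕜 hs : Lp E p μ →L[𝕜] Lp E p μ) := by
  ext1 f
  refine Lp.ext ?_
  filter_upwards [coeFn_indicatorL 𝕜 hs (indicatorL 𝕜 hs f),
    (coeFn_indicatorL 𝕜 hs f).indicator (s := s), coeFn_indicatorL 𝕜 hs f] with x h1 h2 h3
  rw [mul_apply_eq_comp, h1, h2, Set.indicator_indicator, Set.inter_self, h3]

end MeasureTheory.Lp

namespace MeasureTheory.L2

variable {α 𝕜 : Type*} [RCLike 𝕜] [MeasurableSpace α] {μ : Measure α}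

theorem inner_ae_eq_mul_norm_sq {f g : Lp 𝕜 2 μ} {J : α → ℝ}
    (h : g =ᵐ[μ] fun x => (J x : 𝕜) * f x) :
    (fun x => inner 𝕜 (f x) (g x)) =ᵐ[μ] fun x => ((J x * ‖f x‖ ^ 2 : ℝ) : 𝕜) := by
  filter_upwards [h] with x hx
  rw [hx, RCLike.inner_apply', mul_left_comm, RCLike.conj_mul]
  push_cast
  rfl

theorem integrable_mul_norm_sq {f g : Lp 𝕜 2 μ} {J : α → ℝ}
    (h : g =ᵐ[μ] fun x => (J x : 𝕜) * f x) :
    Integrable (fun x => J x * ‖f x‖ ^ 2) μ := by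
  simpa using ((integrable_inner f g).congr (inner_ae_eq_mul_norm_sq h)).re

theorem inner_eq_integral_mul_norm_sq {f g : Lp 𝕜 2 μ} {J : α → ℝ}
    (h : g =ᵐ[μ] fun x => (J x : 𝕜) * f x) :
    inner 𝕜 f g = ((∫ x, J x * ‖f x‖ ^ 2 ∂μ : ℝ) : 𝕜) := by
  rw [inner_def, integral_congr_ae (inner_ae_eq_mul_norm_sq h), integral_ofReal]

theorem norm_sq_eq_integral (f : Lp 𝕜 2 μ) : ‖f‖ ^ 2 = ∫ x, ‖f x‖ ^ 2 ∂μ := by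
  have h := inner_eq_integral_mul_norm_sq (J := 1) (f := f) (g := f) (by simp)
  simp only [inner_self_eq_norm_sq_to_K, Pi.one_apply, one_mul] at h
  exact_mod_cast h

section AdjointCompEqMul

variable (W : Lp 𝕜 2 μ →L[𝕜] Lp 𝕜 2 μ) {J : α → ℝ}

theorem norm_apply_sq_eq_integral
    (hWW : ∀ f : Lp 𝕜 2 μ,
      ((ContinuousLinearMap.adjoint W) (W f) : α → 𝕜) =ᵐ[μ] fun x => (J x : 𝕜) * f x)
    (f : Lp 𝕜 2 μ) : ‖W f‖ ^ 2 = ∫ x, J x * ‖f x‖ ^ 2 ∂μ := by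
  have h := inner_eq_integral_mul_norm_sq (hWW f)
  rw [ContinuousLinearMap.adjoint_inner_right, inner_self_eq_norm_sq_to_K] at h
  exact_mod_cast h

theorem comp_indicatorL_eq_self
    (hWW : ∀ f : Lp 𝕜 2 μ,
      ((ContinuousLinearMap.adjoint W) (W f) : α → 𝕜) =ᵐ[μ] fun x => (J x : 𝕜) * f x)
    {s : Set α} (hs : MeasurableSet s) (hJs : ∀ x ∉ s, J x = 0) :
    W ∘L Lp.indicatorL 𝕜 hs = W := by
  ext1 f
  have hnorm : ‖W (Lp.indicatorL 𝕜 hs f - f)‖ ^ 2 = 0 := by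
    rw [norm_apply_sq_eq_integral W hWW]
    refine integral_eq_zero_of_ae ?_
    filter_upwards [Lp.coeFn_sub (Lp.indicatorL 𝕜 hs f) f, Lp.coeFn_indicatorL 𝕜 hs f]
      with x hsub hQ
    by_cases hx : x ∈ s
    · rw [hsub, Pi.sub_apply, hQ, Set.indicator_of_mem hx, sub_self]
      simp
    · simp [hJs x hx]
  rw [ContinuousLinearMap.comp_apply, ← sub_eq_zero, ← map_sub]
  simpa using hnorm

theorem sqrt_mul_norm_le_norm_apply_indicatorL
    (hWW : ∀ f : Lp 𝕜 2 μ,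
      ((ContinuousLinearMap.adjoint W) (W f) : α → 𝕜) =ᵐ[μ] fun x => (J x : 𝕜) * f x)
    {s : Set α} (hs : MeasurableSet s) {c : ℝ} (hc : 0 ≤ c)
    (hcJ : ∀ᵐ x ∂μ.restrict s, c ≤ J x) (f : Lp 𝕜 2 μ) :
    √c * ‖Lp.indicatorL 𝕜 hs f‖ ≤ ‖W (Lp.indicatorL 𝕜 hs f)‖ := by
  set g := Lp.indicatorL 𝕜 hs f
  have hsq : c * ‖g‖ ^ 2 ≤ ‖W g‖ ^ 2 := by
    rw [norm_sq_eq_integral, norm_apply_sq_eq_integral W hWW, ← integral_const_mul]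
    refine integral_mono_ae (((Lp.memLp g).integrable_norm_pow two_ne_zero).const_mul c)
      (integrable_mul_norm_sq (hWW g)) ?_
    filter_upwards [(ae_restrict_iff' hs).1 hcJ, Lp.coeFn_indicatorL 𝕜 hs f] with x hcx hg
    by_cases hx : x ∈ s
    · exact mul_le_mul_of_nonneg_right (hcx hx) (sq_nonneg _)
    · simp [g, hg, hx]
  calc √c * ‖g‖ = √(c * ‖g‖ ^ 2) := by rw [Real.sqrt_mul hc, Real.sqrt_sq (norm_nonneg _)]
    _ ≤ √(‖W g‖ ^ 2) := Real.sqrt_le_sqrt hsq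
    _ = ‖W g‖ := Real.sqrt_sq (norm_nonneg _)

end AdjointCompEqMul

end MeasureTheory.L2

theorem closed_range_of_bounded_below_on_cozero_general
    {X : Type*} [MeasurableSpace X] {μ : Measure X}
    (W : Lp ℂ 2 μ →L[ℂ] Lp ℂ 2 μ)
    (J : X → ℝ) (hJmeas : Measurable J)
    (hWW : ∀ f : Lp ℂ 2 μ,
      ((ContinuousLinearMap.adjoint W) (W f) : X → ℂ) =ᵐ[μ] fun x => (J x : ℂ) * f x)
    (c : ℝ) (hc : 0 < c)
    (hbound : ∀ᵐ x ∂(μ.restrict {x | J x ≠ 0}), c ≤ J x) :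
    IsClosed (Set.range W) := by
  have hS : MeasurableSet {x | J x ≠ 0} := hJmeas (measurableSet_singleton 0).compl
  have hJS : ∀ x ∉ {x | J x ≠ 0}, J x = 0 := fun x hx => not_not.1 hx
  exact W.isClosed_range_of_isIdempotentElem_of_mul_norm_le
    (Lp.isIdempotentElem_indicatorL ℂ hS) (L2.comp_indicatorL_eq_self W hWW hS hJS)
    (Real.sqrt_pos.2 hc) (L2.sqrt_mul_norm_le_norm_apply_indicatorL W hWW hS hc.le hbound)

/-- If `W` is bounded on `L²(μ)`, `W*W` is multiplication by a nonnegative `J`, and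
`J ≥ c > 0` a.e. on the cozero set of `J`, then `W` has closed range. -/
theorem closed_range_of_bounded_below_on_cozero
    {X : Type*} [MeasurableSpace X] {μ : Measure X} [SigmaFinite μ]
    (W : Lp ℂ 2 μ →L[ℂ] Lp ℂ 2 μ)
    (J : X → ℝ) (hJmeas : Measurable J) (hJnn : ∀ x, 0 ≤ J x)
    (hWW : ∀ f : Lp ℂ 2 μ,
      ((ContinuousLinearMap.adjoint W) (W f) : X → ℂ) =ᵐ[μ] fun x => (J x : ℂ) * f x)
    (c : ℝ) (hc : 0 < c)
    (hbound : ∀ᵐ x ∂(μ.restrict {x | J x ≠ 0}), c ≤ J x) :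
    IsClosed (Set.range W) :=
  closed_range_of_bounded_below_on_cozero_general W J hJmeas hWW c hc hbound
end

section
/- Let (X, Σ, μ) be a σ-finite measure space and let W be a bounded linear operator on L²(μ) with W*W = M_J for some nonnegative measurable J, and suppose ker W = {f ∈ L²(μ) : f = 0 a.e. on Coz J}. If W has closed range, then there exists a constant c > 0 such that J ≥ c almost everywhere on Coz J. -/
/-!
Closed range gives `c * ‖f‖ ≤ ‖W f‖` on `(ker W)ᗮ`, by the open mapping theorem for `W` onto
its range. By the kernel condition, the indicator `1_A` of a finite-measure set `A ⊆ Coz J` lies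
in `(ker W)ᗮ`, and `‖W 1_A‖² = ⟪W* W 1_A, 1_A⟫ = ∫_A J`; hence `c² μ(A) ≤ ∫_A J` for all such `A`,
which by σ-finiteness forces `c² ≤ J` a.e. on `Coz J`.
-/

open MeasureTheory

theorem ContinuousLinearMap.exists_pos_mul_norm_le_of_isClosed_range {𝕜 E F : Type*} [RCLike 𝕜]
    [NormedAddCommGroup E] [InnerProductSpace 𝕜 E] [CompleteSpace E]
    [NormedAddCommGroup F] [NormedSpace 𝕜 F] [CompleteSpace F]
    (T : E →L[𝕜] F) (hT : IsClosed (Set.range T)) :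
    ∃ c > 0, ∀ x ∈ T.kerᗮ, c * ‖x‖ ≤ ‖T x‖ := by
  have : CompleteSpace T.range :=
    (show IsClosed (T.range : Set F) from hT).completeSpace_coe
  obtain ⟨g, hg⟩ := T.rangeRestrict.exists_nonlinearRightInverse_of_surjective
    (LinearMap.range_rangeRestrict (T : E →ₗ[𝕜] F))
  refine ⟨(g.nnnorm : ℝ)⁻¹, inv_pos.2 hg, fun x hx => ?_⟩
  set y := g (T.rangeRestrict x)
  have hTy : T y = T x := congrArg Subtype.val (g.right_inv _)
  have hyx : y - x ∈ T.ker := by simp [hTy]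
  have hxy : ‖x‖ ≤ ‖y‖ := by
    have hpyth := norm_add_sq_eq_norm_sq_add_norm_sq_of_inner_eq_zero x (y - x)
      (Submodule.inner_left_of_mem_orthogonal hyx hx)
    rw [add_sub_cancel] at hpyth
    refine le_of_pow_le_pow_left₀ two_ne_zero (norm_nonneg y) ?_
    rw [sq, sq, hpyth]
    exact le_add_of_nonneg_right (mul_self_nonneg _)
  rw [inv_mul_le_iff₀ (NNReal.coe_pos.2 hg)]
  calc ‖x‖ ≤ ‖y‖ := hxy
    _ ≤ g.nnnorm * ‖T.rangeRestrict x‖ := g.bound _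
    _ = g.nnnorm * ‖T x‖ := rfl

namespace MeasureTheory.L2

variable {X : Type*} [MeasurableSpace X] {μ : Measure X} {𝕜 E : Type*} [RCLike 𝕜]
  [NormedAddCommGroup E] [InnerProductSpace 𝕜 E]

theorem inner_eq_zero_of_ae_eq_zero_restrict_compl {s : Set X} {f g : Lp E 2 μ}
    (hf : f =ᵐ[μ.restrict sᶜ] 0) (hg : g =ᵐ[μ.restrict s] 0) : inner 𝕜 f g = 0 := by
  rw [inner_def]
  refine integral_eq_zero_of_ae (ae_of_ae_restrict_of_ae_restrict_compl s ?_ ?_)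
  · filter_upwards [hg] with x hx
    simp [hx]
  · filter_upwards [hf] with x hx
    simp [hx]

theorem norm_indicatorConstLp_one_sq {s : Set X} (hs : MeasurableSet s) (hμs : μ s ≠ ⊤) :
    ‖indicatorConstLp 2 hs hμs (1 : 𝕜)‖ ^ 2 = μ.real s := by
  rw [← inner_self_eq_norm_sq (𝕜 := 𝕜), inner_indicatorConstLp_one_indicatorConstLp_one,
    Set.inter_self, RCLike.ofReal_re]

theorem integral_mul_norm_indicatorConstLp_one_sq {s : Set X} (hs : MeasurableSet s)
    (hμs : μ s ≠ ⊤) (J : X → ℝ) :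
    ∫ x, J x * ‖indicatorConstLp 2 hs hμs (1 : 𝕜) x‖ ^ 2 ∂μ = ∫ x in s, J x ∂μ := by
  rw [← integral_indicator hs]
  refine integral_congr_ae ?_
  filter_upwards [indicatorConstLp_coeFn (p := 2) (hs := hs) (hμs := hμs) (c := (1 : 𝕜))]
    with x hx
  by_cases hxs : x ∈ s <;> simp [hx, hxs]

end MeasureTheory.L2

theorem norm_apply_sq_eq_integral_of_adjoint_apply_ae_eq {X : Type*} [MeasurableSpace X]
    {μ : Measure X} {𝕜 H : Type*} [RCLike 𝕜] [NormedAddCommGroup H] [InnerProductSpace 𝕜 H]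
    [CompleteSpace H] {W : Lp 𝕜 2 μ →L[𝕜] H} {J : X → ℝ} {f : Lp 𝕜 2 μ}
    (hf : (ContinuousLinearMap.adjoint W (W f) : X → 𝕜) =ᵐ[μ] fun x => (J x : 𝕜) * f x) :
    ‖W f‖ ^ 2 = ∫ x, J x * ‖f x‖ ^ 2 ∂μ := by
  have hpt : ∀ᵐ x ∂μ, inner 𝕜 (ContinuousLinearMap.adjoint W (W f) x) (f x)
      = ((J x * ‖f x‖ ^ 2 : ℝ) : 𝕜) := by
    filter_upwards [hf] with x hx
    rw [hx, RCLike.inner_apply, map_mul, RCLike.conj_ofReal, mul_left_comm, RCLike.mul_conj]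
    push_cast
    ring
  rw [← inner_self_eq_norm_sq (𝕜 := 𝕜), ← ContinuousLinearMap.adjoint_inner_left, L2.inner_def,
    integral_congr_ae hpt, integral_ofReal, RCLike.ofReal_re]

section
variable {X : Type*} [MeasurableSpace X] {μ : Measure X}

theorem ae_le_of_forall_mul_measureReal_le_setIntegral [SigmaFinite μ] {J : X → ℝ}
    (hJ : AEMeasurable J μ) (hJ_nonneg : 0 ≤ᵐ[μ] J) {c : ℝ}
    (h : ∀ s, MeasurableSet s → μ s < ⊤ → IntegrableOn J s μ →
      c * μ.real s ≤ ∫ x in s, J x ∂μ) :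
    ∀ᵐ x ∂μ, c ≤ J x := by
  rcases le_or_gt c 0 with hc | hc
  · filter_upwards [hJ_nonneg] with x hx using hc.trans hx
  have hle : ∀ᵐ x ∂μ, ENNReal.ofReal c ≤ ENNReal.ofReal (J x) := by
    refine ae_le_of_forall_setLIntegral_le_of_sigmaFinite measurable_const fun s hs hμs => ?_
    have hJs : 0 ≤ᵐ[μ.restrict s] J := ae_restrict_of_ae hJ_nonneg
    by_cases hint : IntegrableOn J s μ
    · rw [setLIntegral_const, ← ofReal_integral_eq_lintegral_ofReal hint hJs,
        ← ofReal_measureReal hμs.ne, ← ENNReal.ofReal_mul hc.le]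
      exact ENNReal.ofReal_le_ofReal (h s hs hμs hint)
    · have : ¬HasFiniteIntegral J (μ.restrict s) := fun hfin =>
        hint ⟨hJ.aestronglyMeasurable.restrict, hfin⟩
      rw [hasFiniteIntegral_iff_ofReal hJs, not_lt, top_le_iff] at this
      rw [this]
      exact le_top
  filter_upwards [hle, hJ_nonneg] with x hx hx0
  exact (ENNReal.ofReal_le_ofReal_iff hx0).1 hx

end

/-- If `W*W = M_J`, `ker W` consists exactly of the functions vanishing a.e. on `Coz J`,
and `W` has closed range, then `J` is bounded below by some `c > 0` a.e. on `Coz J`. -/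
theorem bounded_below_on_cozero_of_closed_range
    {X : Type*} [MeasurableSpace X] {μ : Measure X} [SigmaFinite μ]
    (W : Lp ℂ 2 μ →L[ℂ] Lp ℂ 2 μ)
    (J : X → ℝ) (hJmeas : Measurable J) (hJnn : ∀ x, 0 ≤ J x)
    (hWW : ∀ f : Lp ℂ 2 μ,
      ((ContinuousLinearMap.adjoint W) (W f) : X → ℂ) =ᵐ[μ] fun x => (J x : ℂ) * f x)
    (hker : ∀ f : Lp ℂ 2 μ, W f = 0 ↔ (f : X → ℂ) =ᵐ[μ.restrict {x | J x ≠ 0}] 0)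
    (hclosed : IsClosed (Set.range W)) :
    ∃ c : ℝ, 0 < c ∧ ∀ᵐ x ∂(μ.restrict {x | J x ≠ 0}), c ≤ J x := by
  obtain ⟨c, hc, hW⟩ := W.exists_pos_mul_norm_le_of_isClosed_range hclosed
  set S := {x | J x ≠ 0}
  have hS : MeasurableSet S := (hJmeas (measurableSet_singleton 0)).compl
  refine ⟨c ^ 2, by positivity, ae_le_of_forall_mul_measureReal_le_setIntegral
    hJmeas.aemeasurable (ae_of_all _ hJnn) fun s hs hμs _ => ?_⟩
  rw [Measure.restrict_apply hs] at hμs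
  rw [measureReal_restrict_apply hs, Measure.restrict_restrict hs]
  set f := indicatorConstLp 2 (hs.inter hS) hμs.ne (1 : ℂ)
  have hf_compl : f =ᵐ[μ.restrict Sᶜ] 0 := by
    filter_upwards [ae_restrict_of_ae (indicatorConstLp_coeFn (p := 2) (hs := hs.inter hS)
      (hμs := hμs.ne) (c := (1 : ℂ))), ae_restrict_mem hS.compl] with x hx hxS
    exact hx.trans (Set.indicator_of_notMem (fun h => hxS h.2) _)
  have hf : f ∈ W.kerᗮ := (Submodule.mem_orthogonal' _ _).2 fun g hg =>
    L2.inner_eq_zero_of_ae_eq_zero_restrict_compl hf_compl ((hker g).1 hg)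
  calc c ^ 2 * μ.real (s ∩ S) = (c * ‖f‖) ^ 2 := by rw [mul_pow, L2.norm_indicatorConstLp_one_sq]
    _ ≤ ‖W f‖ ^ 2 := pow_le_pow_left₀ (by positivity) (hW f hf) 2
    _ = ∫ x, J x * ‖f x‖ ^ 2 ∂μ := norm_apply_sq_eq_integral_of_adjoint_apply_ae_eq (hWW f)
    _ = ∫ x in s ∩ S, J x ∂μ := L2.integral_mul_norm_indicatorConstLp_one_sq _ _ J
end

section
/- Let μ(X) < ∞ and 1 ≤ p < ∞. Let u_1, …, u_n be nonnegative measurable functions and W = Σ_{i=1}^n u_i C_{φ_i} a bounded operator from L^p(μ) into L^∞(μ). If W has closed range and is injective, then there exists δ > 0 such that Σ_{i=1}^n u_i^p ≥ δ almost everywhere on X. -/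
/-!
Closed range and injectivity make `W` bounded below, `‖f‖_p ≤ K ‖W f‖_∞`. Testing `W` on `1_B`
gives `u_i(x) ≤ ‖W‖ μ(B)^{1/p}` whenever `φ_i x ∈ B`. Hence for pairwise disjoint sets
`B_1, …, B_N` of positive measure, `g = ∑ μ(B_j)^{-1/p} 1_{B_j}` has `‖g‖_p = N^{1/p}` while
`‖W g‖_∞ ≤ n ‖W‖`, so `N` is bounded. A family of maximal size then consists of atoms covering
`X` up to a null set. Measurable functions are a.e. constant on atoms, so `∑ u_i^p` takes finitely
many values a.e., and each of them is positive: if all `u_i` vanished on an atom `A`, the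
injective map `W` would send the span of the indicators of the `m` atoms into the functions
vanishing on `A`, a space of dimension `m - 1`.
-/

open MeasureTheory ENNReal

namespace MeasureTheory

variable {X : Type*}

section Indicator

variable {M : Type*} [AddCommMonoid M] {𝒮 : Finset (Set X)} {x : X}

lemma sum_indicator_apply_of_mem (h𝒮 : (𝒮 : Set (Set X)).PairwiseDisjoint id) (c : Set X → M)
    {B : Set X} (hB : B ∈ 𝒮) (hx : x ∈ B) : ∑ B' ∈ 𝒮, B'.indicator (fun _ => c B') x = c B := by
  rw [Finset.sum_eq_single_of_mem B hB fun B' hB' hne => ?_, Set.indicator_of_mem hx]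
  exact Set.indicator_of_notMem (Set.disjoint_left.1 (h𝒮 hB hB' hne.symm) hx) _

lemma sum_indicator_apply_of_forall_notMem (c : Set X → M) (hx : ∀ B ∈ 𝒮, x ∉ B) :
    ∑ B ∈ 𝒮, B.indicator (fun _ => c B) x = 0 :=
  Finset.sum_eq_zero fun B hB => Set.indicator_of_notMem (hx B hB) _

end Indicator

variable [MeasurableSpace X]

structure IsDisjointPosFamily (μ : Measure X) (𝒮 : Finset (Set X)) : Prop where
  measurableSet : ∀ B ∈ 𝒮, MeasurableSet B
  measure_pos : ∀ B ∈ 𝒮, 0 < μ B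
  pairwiseDisjoint : (𝒮 : Set (Set X)).PairwiseDisjoint id

structure IsMeasureAtom (μ : Measure X) (A : Set X) : Prop where
  measure_pos : 0 < μ A
  zero_or_full : ∀ T, MeasurableSet T → μ (A ∩ T) = 0 ∨ μ (A \ T) = 0

structure IsAtomicPartition (μ : Measure X) (𝒜 : Finset (Set X)) : Prop
    extends IsDisjointPosFamily μ 𝒜 where
  isMeasureAtom : ∀ A ∈ 𝒜, IsMeasureAtom μ A
  measure_compl_eq_zero : μ (⋃ A ∈ 𝒜, A)ᶜ = 0

variable {μ : Measure X} {𝒮 : Finset (Set X)}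

namespace IsDisjointPosFamily

lemma mono {𝒯 : Finset (Set X)} (h : IsDisjointPosFamily μ 𝒮) (h𝒯 : 𝒯 ⊆ 𝒮) :
    IsDisjointPosFamily μ 𝒯 :=
  ⟨fun B hB => h.measurableSet B (h𝒯 hB), fun B hB => h.measure_pos B (h𝒯 hB),
    h.pairwiseDisjoint.subset (by simpa using h𝒯)⟩

lemma insert {C : Set X} (h : IsDisjointPosFamily μ 𝒮) (hC : MeasurableSet C) (hCpos : 0 < μ C)
    (hdisj : ∀ B ∈ 𝒮, Disjoint C B) :
    IsDisjointPosFamily μ (insert C 𝒮) ∧ (insert C 𝒮).card = 𝒮.card + 1 := by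
  have hnotMem : C ∉ 𝒮 := fun hC𝒮 => by
    simp [disjoint_self.1 (hdisj C hC𝒮)] at hCpos
  refine ⟨⟨?_, ?_, ?_⟩, Finset.card_insert_of_notMem hnotMem⟩
  · simpa [hC] using h.measurableSet
  · simpa [hCpos] using h.measure_pos
  · rw [Finset.coe_insert]
    exact h.pairwiseDisjoint.insert fun B hB _ => hdisj B hB

lemma exists_card_gt_of_not_isMeasureAtom (h : IsDisjointPosFamily μ 𝒮) {A : Set X} (hA : A ∈ 𝒮)
    (hnA : ¬ IsMeasureAtom μ A) : ∃ 𝒯, IsDisjointPosFamily μ 𝒯 ∧ 𝒮.card < 𝒯.card := by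
  have hsplit : ¬ ∀ T, MeasurableSet T → μ (A ∩ T) = 0 ∨ μ (A \ T) = 0 :=
    fun hA' => hnA ⟨h.measure_pos A hA, hA'⟩
  push Not at hsplit
  obtain ⟨T, hT, hAT, hAT'⟩ := hsplit
  have hdisj : ∀ B ∈ 𝒮.erase A, Disjoint A B := fun B hB =>
    h.pairwiseDisjoint hA (Finset.mem_of_mem_erase hB) (Finset.ne_of_mem_erase hB).symm
  obtain ⟨h₁, hcard₁⟩ := (h.mono (Finset.erase_subset A 𝒮)).insert
    ((h.measurableSet A hA).diff hT) (pos_iff_ne_zero.2 hAT')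
    fun B hB => (hdisj B hB).mono_left Set.sdiff_subset
  obtain ⟨h₂, hcard₂⟩ := h₁.insert ((h.measurableSet A hA).inter hT) (pos_iff_ne_zero.2 hAT) <| by
    simp only [Finset.mem_insert, forall_eq_or_imp]
    exact ⟨Set.disjoint_sdiff_inter.symm, fun B hB => (hdisj B hB).mono_left Set.inter_subset_left⟩
  refine ⟨_, h₂, ?_⟩
  rw [hcard₂, hcard₁, Finset.card_erase_of_mem hA]
  have := Finset.card_pos.2 ⟨A, hA⟩
  omega

lemma exists_card_gt_of_measure_compl_pos (h : IsDisjointPosFamily μ 𝒮)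
    (hcompl : 0 < μ (⋃ B ∈ 𝒮, B)ᶜ) : ∃ 𝒯, IsDisjointPosFamily μ 𝒯 ∧ 𝒮.card < 𝒯.card := by
  obtain ⟨h', hcard⟩ := h.insert (Finset.measurableSet_biUnion 𝒮 h.measurableSet).compl hcompl
    fun B hB => disjoint_compl_left.mono_right (Set.subset_biUnion_of_mem (u := id) hB)
  exact ⟨_, h', hcard ▸ Nat.lt_succ_self _⟩

lemma measureReal_pos [IsFiniteMeasure μ] (h : IsDisjointPosFamily μ 𝒮) {B : Set X}
    (hB : B ∈ 𝒮) : 0 < μ.real B :=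
  ENNReal.toReal_pos (h.measure_pos B hB).ne' (measure_ne_top μ B)

end IsDisjointPosFamily

theorem exists_isAtomicPartition {N : ℕ} (hN : ∀ 𝒮, IsDisjointPosFamily μ 𝒮 → 𝒮.card ≤ N) :
    ∃ 𝒜, IsAtomicPartition μ 𝒜 := by
  set cards : Set ℕ := {k | ∃ 𝒮, IsDisjointPosFamily μ 𝒮 ∧ 𝒮.card = k}
  have hne : cards.Nonempty := ⟨0, ∅, ⟨by simp, by simp, by simp⟩, rfl⟩
  have hbdd : BddAbove cards := ⟨N, by rintro _ ⟨𝒮, h𝒮, rfl⟩; exact hN 𝒮 h𝒮⟩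
  obtain ⟨𝒜, h𝒜, hcard⟩ := Nat.sSup_mem hne hbdd
  have hmax : ∀ 𝒯, IsDisjointPosFamily μ 𝒯 → ¬ 𝒜.card < 𝒯.card := fun 𝒯 h𝒯 =>
    not_lt.2 (hcard ▸ le_csSup hbdd ⟨𝒯, h𝒯, rfl⟩)
  refine ⟨𝒜, { h𝒜 with isMeasureAtom := fun A hA => ?_, measure_compl_eq_zero := ?_ }⟩
  · by_contra hnA
    obtain ⟨𝒯, h𝒯, hlt⟩ := h𝒜.exists_card_gt_of_not_isMeasureAtom hA hnA
    exact hmax 𝒯 h𝒯 hlt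
  · by_contra hpos
    obtain ⟨𝒯, h𝒯, hlt⟩ := h𝒜.exists_card_gt_of_measure_compl_pos (pos_iff_ne_zero.2 hpos)
    exact hmax 𝒯 h𝒯 hlt

theorem IsMeasureAtom.exists_ae_eq_const {β : Type*} [MeasurableSpace β] [Nonempty β]
    [HasCountableSeparatingOn β MeasurableSet Set.univ] {A : Set X} (hA : MeasurableSet A)
    (h : IsMeasureAtom μ A) {f : X → β} (hf : AEMeasurable f (μ.restrict A)) :
    ∃ c, f =ᵐ[μ.restrict A] fun _ => c := by
  obtain ⟨c, hc⟩ := Filter.exists_eventuallyEq_const_of_forall_separating (l := ae (μ.restrict A))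
    (f := hf.mk f) MeasurableSet fun U hU => by
      rcases h.zero_or_full _ (hf.measurable_mk hU) with h0 | h0
      · refine Or.inr ((ae_restrict_iff' hA).2 ?_)
        filter_upwards [measure_eq_zero_iff_ae_notMem.1 h0] with x hx hxA hxU using hx ⟨hxA, hxU⟩
      · refine Or.inl ((ae_restrict_iff' hA).2 ?_)
        filter_upwards [measure_eq_zero_iff_ae_notMem.1 h0] with x hx hxA
        by_contra hxU
        exact hx ⟨hxA, hxU⟩
  exact ⟨c, hf.ae_eq_mk.trans hc⟩

theorem IsMeasureAtom.exists_pos_ae_le_sum_rpow {ι : Type*} [Fintype ι] {A : Set X}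
    (hA : MeasurableSet A) (h : IsMeasureAtom μ A) {u : ι → X → ℝ}
    (hu : ∀ i, Measurable (u i)) (hunn : ∀ i x, 0 ≤ u i x) (r : ℝ)
    (hne : ¬ ∀ᵐ x ∂μ.restrict A, ∀ i, u i x = 0) :
    ∃ c > 0, ∀ᵐ x ∂μ.restrict A, c ≤ ∑ i, u i x ^ r := by
  obtain ⟨c, hc⟩ := h.exists_ae_eq_const hA (f := fun x => ∑ i, u i x ^ r)
    (Finset.measurable_sum _ fun i _ => (hu i).pow_const r).aemeasurable
  refine ⟨c, ?_, hc.mono fun x hx => hx.ge⟩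
  obtain ⟨x, hx, hxc⟩ := ((Filter.not_eventually.1 hne).and_eventually hc).exists
  obtain ⟨i, hi⟩ := not_forall.1 hx
  change _ = c at hxc
  rw [← hxc]
  exact Finset.sum_pos' (fun j _ => Real.rpow_nonneg (hunn j x) r)
    ⟨i, Finset.mem_univ i, Real.rpow_pos_of_pos ((hunn i x).lt_of_ne' hi) r⟩

theorem IsAtomicPartition.ae_of_forall_ae_restrict {𝒜 : Finset (Set X)}
    (h𝒜 : IsAtomicPartition μ 𝒜) {P : X → Prop} (h : ∀ A ∈ 𝒜, ∀ᵐ x ∂μ.restrict A, P x) :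
    ∀ᵐ x ∂μ, P x := by
  have hU : ∀ᵐ x ∂μ.restrict (⋃ A ∈ 𝒜, A), P x := (ae_restrict_biUnion_finset_iff id 𝒜 P).2 h
  rwa [Measure.restrict_eq_self_of_ae_mem
    (measure_eq_zero_iff_ae_notMem.1 h𝒜.measure_compl_eq_zero |>.mono fun x hx => not_not.1 hx)]
    at hU

section FiniteDimensional

variable [IsFiniteMeasure μ]

variable (μ) in
noncomputable def Lp.setIntegralₗ (q : ℝ≥0∞) [Fact (1 ≤ q)] (A : Set X) :
    Lp ℂ q μ →ₗ[ℂ] ℂ where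
  toFun g := ∫ x in A, g x ∂μ
  map_add' g h := by
    have hint : ∀ g : Lp ℂ q μ, IntegrableOn g A μ := fun g =>
      ((Lp.memLp g).integrable (Fact.out : 1 ≤ q)).integrableOn
    rw [← integral_add (hint g) (hint h)]
    exact integral_congr_ae (ae_restrict_of_ae (Lp.coeFn_add g h))
  map_smul' c g := by
    rw [RingHom.id_apply, ← integral_smul]
    exact integral_congr_ae (ae_restrict_of_ae (Lp.coeFn_smul c g))

lemma Lp.setIntegralₗ_apply {q : ℝ≥0∞} [Fact (1 ≤ q)] (A : Set X) (g : Lp ℂ q μ) :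
    Lp.setIntegralₗ μ q A g = ∫ x in A, g x ∂μ := rfl

theorem IsAtomicPartition.eq_zero_of_forall_setIntegral_eq_zero {𝒜 : Finset (Set X)}
    (h𝒜 : IsAtomicPartition μ 𝒜) {q : ℝ≥0∞} {g : Lp ℂ q μ}
    (hg : ∀ A ∈ 𝒜, ∫ x in A, g x ∂μ = 0) : g = 0 := by
  rw [Lp.eq_zero_iff_ae_eq_zero]
  refine h𝒜.ae_of_forall_ae_restrict fun A hA => ?_
  obtain ⟨c, hc⟩ := (h𝒜.isMeasureAtom A hA).exists_ae_eq_const (h𝒜.measurableSet A hA)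
    (Lp.aestronglyMeasurable g).aemeasurable.restrict
  have : μ.real A • c = 0 := by
    rw [← hg A hA, integral_congr_ae hc, setIntegral_const]
  rw [smul_eq_zero, or_iff_right (h𝒜.measureReal_pos hA).ne'] at this
  subst this
  exact hc

theorem IsAtomicPartition.exists_not_ae_eq_zero_restrict_of_injective {𝒜 : Finset (Set X)}
    (h𝒜 : IsAtomicPartition μ 𝒜) {p q : ℝ≥0∞} [Fact (1 ≤ p)] [Fact (1 ≤ q)]
    {T : Lp ℂ p μ →ₗ[ℂ] Lp ℂ q μ} (hT : Function.Injective T) {A : Set X} (hA : A ∈ 𝒜) :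
    ∃ f, ¬ T f =ᵐ[μ.restrict A] 0 := by
  by_contra! hzero
  let E : (𝒜 → ℂ) →ₗ[ℂ] Lp ℂ p μ := Fintype.linearCombination ℂ fun B =>
    indicatorConstLp p (h𝒜.measurableSet B B.2) (measure_ne_top μ B) 1
  let ev : Lp ℂ q μ →ₗ[ℂ] (𝒜 → ℂ) := LinearMap.pi fun B => Lp.setIntegralₗ μ q B
  have hev_E : ∀ (c : 𝒜 → ℂ) (B : 𝒜), Lp.setIntegralₗ μ p B (E c) = μ.real B * c B := by
    intro c B
    simp only [E, Fintype.linearCombination_apply, map_sum, map_smul, Lp.setIntegralₗ_apply,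
      setIntegral_indicatorConstLp (h𝒜.measurableSet B B.2), smul_eq_mul]
    rw [Finset.sum_eq_single B (fun B' _ hB' => ?_) (by simp)]
    · simp [mul_comm]
    · have hdisj : Disjoint (B' : Set X) B :=
        h𝒜.pairwiseDisjoint B'.2 B.2 (Subtype.coe_ne_coe.2 hB')
      simp [hdisj.inter_eq]
  -- `ev ∘ T ∘ E` is an injective endomorphism of `𝒜 → ℂ` whose `A`-coordinate vanishes.
  have hinj : Function.Injective (ev ∘ₗ T ∘ₗ E) := by
    rw [← LinearMap.ker_eq_bot, LinearMap.ker_eq_bot']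
    intro c hc
    have hTE : T (E c) = 0 :=
      h𝒜.eq_zero_of_forall_setIntegral_eq_zero fun B hB => congrFun hc ⟨B, hB⟩
    have hE : E c = 0 := hT (by rw [hTE, map_zero])
    funext B
    have := hev_E c B
    rw [hE, map_zero, eq_comm, mul_eq_zero, Complex.ofReal_eq_zero] at this
    exact this.resolve_left (h𝒜.measureReal_pos B.2).ne'
  obtain ⟨c, hc⟩ := LinearMap.injective_iff_surjective.1 hinj (Pi.single ⟨A, hA⟩ 1)
  have : ∫ x in A, T (E c) x ∂μ = 0 := by
    rw [integral_congr_ae (hzero (E c))]; simp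
  simpa [ev, Lp.setIntegralₗ_apply, this] using congrFun hc ⟨A, hA⟩

end FiniteDimensional

lemma Lp.ae_norm_le_norm_top {E : Type*} [NormedAddCommGroup E] (g : Lp E ∞ μ) :
    ∀ᵐ x ∂μ, ‖g x‖ ≤ ‖g‖ := by
  rw [Lp.norm_def, toReal_eLpNorm (Lp.aestronglyMeasurable g)]
  exact ae_le_lpNorm_exponent_top (Lp.memLp g)

section TestFunction

variable (μ) in
noncomputable def normalizedIndicatorSum (p : ℝ≥0∞) (𝒮 : Finset (Set X)) (x : X) : ℂ :=
  ∑ B ∈ 𝒮, B.indicator (fun _ => (((μ.real B) ^ p.toReal⁻¹)⁻¹ : ℝ)) x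

lemma norm_normalizedIndicatorSum_rpow (h𝒮 : IsDisjointPosFamily μ 𝒮) {p : ℝ≥0∞}
    (hp : p.toReal ≠ 0) (x : X) :
    ‖normalizedIndicatorSum μ p 𝒮 x‖ ^ p.toReal =
      ∑ B ∈ 𝒮, B.indicator (fun _ => (μ.real B)⁻¹) x := by
  by_cases hx : ∃ B ∈ 𝒮, x ∈ B
  · obtain ⟨B, hB, hxB⟩ := hx
    rw [normalizedIndicatorSum, sum_indicator_apply_of_mem h𝒮.pairwiseDisjoint _ hB hxB,
      sum_indicator_apply_of_mem h𝒮.pairwiseDisjoint _ hB hxB, Complex.norm_real,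
      Real.norm_eq_abs, abs_of_nonneg (by positivity), Real.inv_rpow (by positivity),
      Real.rpow_inv_rpow measureReal_nonneg hp]
  · push Not at hx
    rw [normalizedIndicatorSum, sum_indicator_apply_of_forall_notMem _ hx,
      sum_indicator_apply_of_forall_notMem _ hx, norm_zero, Real.zero_rpow hp]

variable [IsFiniteMeasure μ]

lemma memLp_normalizedIndicatorSum (h𝒮 : IsDisjointPosFamily μ 𝒮) (p : ℝ≥0∞) :
    MemLp (normalizedIndicatorSum μ p 𝒮) p μ :=
  memLp_finsetSum 𝒮 fun B hB =>
    memLp_indicator_const p (h𝒮.measurableSet B hB) _ (Or.inr (measure_ne_top μ B))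

lemma norm_toLp_normalizedIndicatorSum (h𝒮 : IsDisjointPosFamily μ 𝒮) {p : ℝ≥0∞}
    (hp0 : p ≠ 0) (hp : p ≠ ∞) :
    ‖(memLp_normalizedIndicatorSum h𝒮 p).toLp‖ = (𝒮.card : ℝ) ^ p.toReal⁻¹ := by
  have hint : ∫ x, ‖normalizedIndicatorSum μ p 𝒮 x‖ ^ p.toReal ∂μ = 𝒮.card := by
    simp_rw [norm_normalizedIndicatorSum_rpow h𝒮 (ENNReal.toReal_ne_zero.2 ⟨hp0, hp⟩)]
    rw [integral_finsetSum _ fun B hB => (integrable_const _).indicator (h𝒮.measurableSet B hB),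
      Finset.sum_congr rfl fun B hB => integral_indicator_const _ (h𝒮.measurableSet B hB)]
    simp only [smul_eq_mul]
    rw [Finset.sum_congr rfl fun B hB => mul_inv_cancel₀ (h𝒮.measureReal_pos hB).ne']
    simp
  rw [Lp.norm_toLp, toReal_eLpNorm (memLp_normalizedIndicatorSum h𝒮 p).1,
    lpNorm_eq_integral_norm_rpow_toReal hp0 hp (memLp_normalizedIndicatorSum h𝒮 p).1, hint]

lemma norm_mul_normalizedIndicatorSum_le {p : ℝ≥0∞} (h𝒮 : IsDisjointPosFamily μ 𝒮) {a C : ℝ}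
    (ha : 0 ≤ a) (hC : 0 ≤ C) {y : X} (hy : ∀ B ∈ 𝒮, y ∈ B → a ≤ C * μ.real B ^ p.toReal⁻¹) :
    ‖(a : ℂ) * normalizedIndicatorSum μ p 𝒮 y‖ ≤ C := by
  by_cases hy' : ∃ B ∈ 𝒮, y ∈ B
  · obtain ⟨B, hB, hyB⟩ := hy'
    have hμB : 0 < μ.real B ^ p.toReal⁻¹ := Real.rpow_pos_of_pos (h𝒮.measureReal_pos hB) _
    rw [normalizedIndicatorSum, sum_indicator_apply_of_mem h𝒮.pairwiseDisjoint _ hB hyB,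
      ← Complex.ofReal_mul, Complex.norm_real, Real.norm_eq_abs, abs_of_nonneg (by positivity),
      ← div_eq_mul_inv, div_le_iff₀ hμB]
    exact hy B hB hyB
  · push Not at hy'
    rw [normalizedIndicatorSum, sum_indicator_apply_of_forall_notMem _ hy', mul_zero, norm_zero]
    exact hC

end TestFunction

section WeightedComposition

variable {p : ℝ≥0∞} [Fact (1 ≤ p)] {ι : Type*} [Fintype ι] {u : ι → X → ℝ} {φ : ι → X → X}
  {W : Lp ℂ p μ →L[ℂ] Lp ℂ ∞ μ}

theorem ae_eq_sum_mul_comp_of_ae_eq (hφ : ∀ i, Measure.QuasiMeasurePreserving (φ i) μ μ)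
    (hW : ∀ f : Lp ℂ p μ, (W f : X → ℂ) =ᵐ[μ] fun x => ∑ i, (u i x : ℂ) * (f : X → ℂ) (φ i x))
    {f : Lp ℂ p μ} {g : X → ℂ} (hfg : f =ᵐ[μ] g) :
    (W f : X → ℂ) =ᵐ[μ] fun x => ∑ i, (u i x : ℂ) * g (φ i x) := by
  filter_upwards [hW f, ae_all_iff.2 fun i => (hφ i).ae_eq_comp hfg] with x hx hcomp
  simp only [Function.comp_apply] at hcomp
  simp only [hx, hcomp]

variable [IsFiniteMeasure μ]

theorem ae_weight_le_opNorm_mul_measureReal_rpow (hp : p ≠ ∞) (hunn : ∀ i x, 0 ≤ u i x)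
    (hφ : ∀ i, Measure.QuasiMeasurePreserving (φ i) μ μ)
    (hW : ∀ f : Lp ℂ p μ, (W f : X → ℂ) =ᵐ[μ] fun x => ∑ i, (u i x : ℂ) * (f : X → ℂ) (φ i x))
    {B : Set X} (hB : MeasurableSet B) :
    ∀ᵐ x ∂μ, ∀ i, φ i x ∈ B → u i x ≤ ‖W‖ * μ.real B ^ p.toReal⁻¹ := by
  set e := indicatorConstLp p hB (measure_ne_top μ B) (1 : ℂ)
  have hp0 : p ≠ 0 := (zero_lt_one.trans_le Fact.out).ne'
  have he : ‖e‖ = μ.real B ^ p.toReal⁻¹ := by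
    rw [norm_indicatorConstLp hp0 hp, norm_one, one_mul, one_div]
  filter_upwards [ae_eq_sum_mul_comp_of_ae_eq hφ hW indicatorConstLp_coeFn,
    Lp.ae_norm_le_norm_top (W e)] with x hx hle i hi
  have hcast : ∀ j, (u j x : ℂ) * B.indicator (fun _ => 1) (φ j x)
      = ((u j x * B.indicator (fun _ => 1) (φ j x) : ℝ) : ℂ) := fun j => by
    by_cases hj : φ j x ∈ B <;> simp [hj]
  calc u i x ≤ ∑ j, u j x * B.indicator (fun _ => 1) (φ j x) := by
        refine le_of_eq_of_le (by simp [hi])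
          (Finset.single_le_sum (fun j _ => ?_) (Finset.mem_univ i))
        by_cases hj : φ j x ∈ B <;> simp [hj, hunn j x]
    _ ≤ ‖W e x‖ := by
        rw [hx, Finset.sum_congr rfl fun j _ => hcast j, ← Complex.ofReal_sum, Complex.norm_real]
        exact Real.le_norm_self _
    _ ≤ ‖W‖ * ‖e‖ := hle.trans (W.le_opNorm e)
    _ = ‖W‖ * μ.real B ^ p.toReal⁻¹ := by rw [he]

theorem IsDisjointPosFamily.card_le_of_antilipschitz (hp : p ≠ ∞) (hunn : ∀ i x, 0 ≤ u i x)
    (hφ : ∀ i, Measure.QuasiMeasurePreserving (φ i) μ μ)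
    (hW : ∀ f : Lp ℂ p μ, (W f : X → ℂ) =ᵐ[μ] fun x => ∑ i, (u i x : ℂ) * (f : X → ℂ) (φ i x))
    {K : NNReal} (hK : AntilipschitzWith K W) (h𝒮 : IsDisjointPosFamily μ 𝒮) :
    (𝒮.card : ℝ) ≤ (K * (Fintype.card ι * ‖W‖)) ^ p.toReal := by
  have hp0 : p ≠ 0 := (zero_lt_one.trans_le Fact.out).ne'
  have hr : 0 < p.toReal := ENNReal.toReal_pos hp0 hp
  set f := (memLp_normalizedIndicatorSum h𝒮 p).toLp
  have hWf : ‖W f‖ ≤ Fintype.card ι * ‖W‖ := by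
    have hbd : ∀ᵐ x ∂μ, ‖W f x‖ ≤ Fintype.card ι * ‖W‖ := by
      filter_upwards [ae_eq_sum_mul_comp_of_ae_eq hφ hW (MemLp.coeFn_toLp _),
        (Filter.eventually_all_finset 𝒮).2 fun B hB =>
          ae_weight_le_opNorm_mul_measureReal_rpow hp hunn hφ hW (h𝒮.measurableSet B hB)]
        with x hx hweight
      rw [hx]
      calc _ ≤ ∑ i, ‖(u i x : ℂ) * normalizedIndicatorSum μ p 𝒮 (φ i x)‖ := norm_sum_le _ _
        _ ≤ ∑ _i : ι, ‖W‖ := Finset.sum_le_sum fun i _ =>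
            norm_mul_normalizedIndicatorSum_le h𝒮 (hunn i x) (norm_nonneg W)
              fun B hB hxB => hweight B hB i hxB
        _ = _ := by simp
    simpa using Lp.norm_le_of_ae_bound (by positivity) hbd
  have hcard : (𝒮.card : ℝ) ^ p.toReal⁻¹ ≤ K * (Fintype.card ι * ‖W‖) := by
    rw [← norm_toLp_normalizedIndicatorSum h𝒮 hp0 hp]
    exact (hK.le_mul_norm (map_zero W) f).trans (by gcongr)
  calc (𝒮.card : ℝ) = ((𝒮.card : ℝ) ^ p.toReal⁻¹) ^ p.toReal :=
        (Real.rpow_inv_rpow (by positivity) hr.ne').symm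
    _ ≤ _ := Real.rpow_le_rpow (by positivity) hcard hr.le

end WeightedComposition

end MeasureTheory

/-- On a finite measure space, if a finite sum `W = ∑ uᵢ C_{φᵢ}` of weighted composition
operators with nonnegative weights is bounded from `L^p(μ)` into `L^∞(μ)`, injective and
has closed range, then `∑ uᵢᵖ ≥ δ` a.e. for some `δ > 0`. -/
theorem sum_pow_bounded_below_of_closed_range_into_Linfty
    {X : Type*} [MeasurableSpace X] {μ : Measure X} [IsFiniteMeasure μ]
    (p : ℝ≥0∞) [Fact (1 ≤ p)] (hptop : p ≠ ∞)
    (n : ℕ) (u : Fin n → X → ℝ) (hu : ∀ i, Measurable (u i)) (hunn : ∀ i x, 0 ≤ u i x)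
    (φ : Fin n → X → X) (hφ : ∀ i, Measurable (φ i))
    (hns : ∀ i, μ.map (φ i) ≪ μ)
    (W : Lp ℂ p μ →L[ℂ] Lp ℂ ∞ μ)
    (hW : ∀ f : Lp ℂ p μ,
      (W f : X → ℂ) =ᵐ[μ] fun x => ∑ i, (u i x : ℂ) * (f : X → ℂ) (φ i x))
    (hclosed : IsClosed (Set.range W)) (hinj : Function.Injective W) :
    ∃ δ : ℝ, 0 < δ ∧ ∀ᵐ x ∂μ, δ ≤ ∑ i, u i x ^ p.toReal := by
  have hqmp : ∀ i, Measure.QuasiMeasurePreserving (φ i) μ μ := fun i => ⟨hφ i, hns i⟩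
  obtain ⟨K, hK⟩ := W.antilipschitz_of_injective_of_isClosed_range hinj hclosed
  obtain ⟨𝒜, h𝒜⟩ := exists_isAtomicPartition (μ := μ)
    (N := ⌈(K * (Fintype.card (Fin n) * ‖W‖)) ^ p.toReal⌉₊) fun 𝒮 h𝒮 =>
      Nat.cast_le.1 ((h𝒮.card_le_of_antilipschitz hptop hunn hqmp hW hK).trans (Nat.le_ceil _))
  have hweights : ∀ A ∈ 𝒜, ¬ ∀ᵐ x ∂μ.restrict A, ∀ i, u i x = 0 := fun A hA hzero => by
    obtain ⟨f, hf⟩ := h𝒜.exists_not_ae_eq_zero_restrict_of_injective (T := W.toLinearMap) hinj hA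
    refine hf ?_
    filter_upwards [ae_restrict_of_ae (hW f), hzero] with x hx hx0
    simp [hx, hx0]
  have hδ : ∀ A ∈ 𝒜, ∀ᶠ δ in nhdsWithin 0 (Set.Ioi 0),
      ∀ᵐ x ∂μ.restrict A, δ ≤ ∑ i, u i x ^ p.toReal := fun A hA => by
    obtain ⟨c, hc, hcs⟩ := (h𝒜.isMeasureAtom A hA).exists_pos_ae_le_sum_rpow
      (h𝒜.measurableSet A hA) hu hunn p.toReal (hweights A hA)
    filter_upwards [Ioo_mem_nhdsGT hc] with δ hδ using hcs.mono fun x hx => hδ.2.le.trans hx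
  obtain ⟨δ, hδ𝒜, hδpos⟩ :=
    (((Filter.eventually_all_finset 𝒜).2 hδ).and self_mem_nhdsWithin).exists
  exact ⟨δ, hδpos, h𝒜.ae_of_forall_ae_restrict hδ𝒜⟩
end
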